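/- For n = 5, the extended quotient 𝕋̂⁵/S_5 (coordinate-permutation action) is homeomorphic to the disjoint union 𝕋 ⊔ 𝕋² ⊔ 𝕋² ⊔ (𝕋 × Sym²𝕋) ⊔ (𝕋 × Sym²𝕋) ⊔ (𝕋 × Sym³𝕋) ⊔ Sym⁵𝕋, one component for each of the seven partitions of 5. -/

import Mathlib

/-!
A point `(γ, z)` of the extended space can be conjugated so that `γ` is one of seven fixed
representatives of the cycle types of `S_5`, and `z`, being fixed by `γ`, is constant on the
cycles of `γ`, i.e. it is a choice of one value per cycle. Two such points with the same `γ` are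
identified exactly by the centralizer of `γ`, which acts on the cycles by permuting those of equal
length arbitrarily; for `S_5` at most one length occurs more than once, so a component is a product
of circles (one per cycle of a length occurring once) and a symmetric power of the circle. This
gives a continuous bijection from the compact disjoint union onto the extended quotient, which is
Hausdorff as a quotient by a finite group, hence a homeomorphism; it is injective across
components because the conjugacy class of `γ` is well defined on the extended quotient.
-/

/-- The coordinate-permutation action of `S_r` on the torus `𝕋^r`. -/
instance circlePermAction (r : ℕ) : MulAction (Equiv.Perm (Fin r)) (Fin r → Circle) where
  smul σ z := fun i => z (σ⁻¹ i)
  one_smul z := funext fun i => by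
    show z ((1 : Equiv.Perm (Fin r))⁻¹ i) = z i
    simp
  mul_smul σ τ z := funext fun i => by
    show z ((σ * τ)⁻¹ i) = z (τ⁻¹ (σ⁻¹ i))
    rw [mul_inv_rev, Equiv.Perm.mul_apply]

/-- The symmetric product `Sym^r 𝕋 = 𝕋^r / S_r`. -/
abbrev SymTorus (r : ℕ) : Type :=
  Quotient (MulAction.orbitRel (Equiv.Perm (Fin r)) (Fin r → Circle))

instance (r : ℕ) : TopologicalSpace (Equiv.Perm (Fin r)) := ⊥
instance (r : ℕ) : DiscreteTopology (Equiv.Perm (Fin r)) := ⟨rfl⟩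

/-- The extended space `{(γ, z) ∈ S_n × 𝕋ⁿ : γ • z = z}`. -/
abbrev ExtTorus (n : ℕ) : Type :=
  {p : Equiv.Perm (Fin n) × (Fin n → Circle) // p.1 • p.2 = p.2}

/-- The action `g • (γ, z) = (gγg⁻¹, g • z)` of `S_n` on the extended space. -/
instance extTorusAction (n : ℕ) : MulAction (Equiv.Perm (Fin n)) (ExtTorus n) where
  smul g p := ⟨(g * p.1.1 * g⁻¹, g • p.1.2), by
    show (g * p.1.1 * g⁻¹) • (g • p.1.2) = g • p.1.2
    rw [mul_smul, mul_smul, inv_smul_smul, p.2]⟩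
  one_smul p := Subtype.ext (by
    show ((1 : Equiv.Perm (Fin n)) * p.1.1 * (1 : Equiv.Perm (Fin n))⁻¹,
      (1 : Equiv.Perm (Fin n)) • p.1.2) = p.1
    simp)
  mul_smul g h p := Subtype.ext (by
    show ((g * h) * p.1.1 * (g * h)⁻¹, (g * h) • p.1.2)
        = (g * (h * p.1.1 * h⁻¹) * g⁻¹, g • h • p.1.2)
    rw [Prod.mk.injEq]
    exact ⟨by group, mul_smul g h p.1.2⟩)

/-- The extended quotient `𝕋̂ⁿ/S_n`. -/
abbrev ExtQuotTorus (n : ℕ) : Type :=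
  Quotient (MulAction.orbitRel (Equiv.Perm (Fin n)) (ExtTorus n))

open Equiv MulAction Function

@[simp]
lemma circlePermAction_smul_apply {r : ℕ} (σ : Perm (Fin r)) (z : Fin r → Circle) (i : Fin r) :
    (σ • z) i = z (σ⁻¹ i) := rfl

lemma ExtTorus.smul_val {n : ℕ} (g : Perm (Fin n)) (x : ExtTorus n) :
    (g • x).1 = (g * x.1.1 * g⁻¹, g • x.1.2) := rfl

section Topology

variable {n : ℕ}

instance : ContinuousConstSMul (Perm (Fin n)) (Fin n → Circle) :=
  ⟨fun σ => continuous_pi fun i => continuous_apply (σ⁻¹ i)⟩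

instance : CompactSpace (ExtTorus n) :=
  isCompact_iff_compactSpace.mp <| IsClosed.isCompact <|
    isClosed_eq (continuous_prod_of_discrete_left.mpr continuous_const_smul) continuous_snd

instance : ContinuousConstSMul (Perm (Fin n)) (ExtTorus n) :=
  ⟨fun g => (Continuous.prodMap (continuous_of_discreteTopology (f := (g * · * g⁻¹)))
    (continuous_const_smul g) |>.comp continuous_subtype_val).subtype_mk _⟩

instance : ProperlyDiscontinuousSMul (Perm (Fin n)) (ExtTorus n) :=
  ⟨fun _ _ => Set.toFinite _⟩

instance : T2Space (ExtQuotTorus n) :=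
  t2Space_of_properlyDiscontinuousSMul_of_t2Space

end Topology

structure ParametrizesPreimage {α Z K : Type*} (κ : Z → K) (S : Set K) (F : α → Z) :
    Prop where
  injective : Injective F
  range_eq : Set.range F = κ ⁻¹' S

namespace ParametrizesPreimage

variable {α β Z K : Type*} {κ : Z → K} {S T : Set K} {F : α → Z}

lemma apply_mem (hF : ParametrizesPreimage κ S F) (a : α) : κ (F a) ∈ S :=
  show F a ∈ κ ⁻¹' S from hF.range_eq ▸ Set.mem_range_self a

lemma surjective (hF : ParametrizesPreimage κ S F) (hS : ∀ z, κ z ∈ S) : Surjective F :=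
  fun z => (Set.ext_iff.mp hF.range_eq z).mpr (hS z)

lemma comp_equiv (hF : ParametrizesPreimage κ S F) (e : β ≃ α) :
    ParametrizesPreimage κ S (F ∘ e) :=
  ⟨hF.injective.comp e.injective, e.surjective.range_comp F ▸ hF.range_eq⟩

lemma sumElim {G : β → Z} (hF : ParametrizesPreimage κ S F) (hG : ParametrizesPreimage κ T G)
    (hST : Disjoint S T) : ParametrizesPreimage κ (S ∪ T) (Sum.elim F G) where
  injective := hF.injective.sumElim hG.injective fun a b h =>
    hST.ne_of_mem (hF.apply_mem a) (hG.apply_mem b) (congrArg κ h)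
  range_eq := by rw [Set.Sum.elim_range, hF.range_eq, hG.range_eq, Set.preimage_union]

end ParametrizesPreimage

namespace Equiv.Perm

structure IsCycleLabelling {α ι : Type*} (p : Perm α) (label : α → ι) : Prop where
  surjective : Surjective label
  eq_iff_sameCycle : ∀ i j, label i = label j ↔ p.SameCycle i j

lemma isCycleLabelling_one {α : Type*} : (1 : Perm α).IsCycleLabelling id :=
  ⟨surjective_id, fun _ _ => sameCycle_one.symm⟩

lemma IsCycleLabelling.label_apply {α ι : Type*} {p : Perm α} {label : α → ι}
    (hl : p.IsCycleLabelling label) (i : α) : label (p i) = label i :=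
  (hl.eq_iff_sameCycle _ _).mpr (sameCycle_apply_left.mpr .rfl)

variable {n : ℕ} {p : Perm (Fin n)}

lemma SameCycle.eq_of_smul_eq {i j : Fin n} (h : p.SameCycle i j) {z : Fin n → Circle}
    (hz : p • z = z) : z i = z j := by
  obtain ⟨k, rfl⟩ := h
  have hk : (p ^ k) • z = z := mem_stabilizer_iff.mp (zpow_mem (mem_stabilizer_iff.mpr hz) k)
  simpa using congrFun hk ((p ^ k) i)

namespace IsCycleLabelling

variable {ι : Type*} {label : Fin n → ι}

lemma smul_comp (hl : p.IsCycleLabelling label) (a : ι → Circle) :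
    p • (a ∘ label) = a ∘ label :=
  funext fun i => by simpa using congrArg a (hl.label_apply (p⁻¹ i)).symm

lemma comp_surjInv_comp (hl : p.IsCycleLabelling label) {z : Fin n → Circle} (hz : p • z = z) :
    (z ∘ surjInv hl.surjective) ∘ label = z :=
  funext fun _ => ((hl.eq_iff_sameCycle _ _).mp (surjInv_eq hl.surjective _)).eq_of_smul_eq hz

end IsCycleLabelling

end Equiv.Perm

namespace ExtQuotTorus

section ConjClass

variable {n : ℕ}

def conjClass : ExtQuotTorus n → ConjClasses (Perm (Fin n)) :=
  Quotient.lift (fun x => ConjClasses.mk x.1.1) fun _ x ⟨g, hg⟩ => by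
    rw [← hg]
    exact ConjClasses.mk_eq_mk_iff_isConj.mpr (isConj_iff.mpr ⟨g, rfl⟩).symm

lemma exists_mk_eq_of_conjClass_eq {p : Perm (Fin n)} {q : ExtQuotTorus n}
    (hq : q.conjClass = ConjClasses.mk p) : ∃ x : ExtTorus n, x.1.1 = p ∧ ⟦x⟧ = q := by
  induction q using Quotient.ind with | _ x => ?_
  obtain ⟨g, hg⟩ := isConj_iff.mp (ConjClasses.mk_eq_mk_iff_isConj.mp hq)
  exact ⟨g • x, hg, Quotient.sound (mem_orbit x g)⟩

end ConjClass

section CycleValues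

variable {n : ℕ} {ι : Type*} {p : Perm (Fin n)} {label : Fin n → ι}

def ofCycleValues (hl : p.IsCycleLabelling label) (a : ι → Circle) : ExtQuotTorus n :=
  ⟦⟨(p, a ∘ label), hl.smul_comp a⟩⟧

variable (hl : p.IsCycleLabelling label)

lemma continuous_ofCycleValues : Continuous (ofCycleValues hl) :=
  continuous_quot_mk.comp <| Continuous.subtype_mk
    (continuous_const.prodMk (continuous_pi fun i => continuous_apply (label i))) _

lemma ofCycleValues_comp {g : Perm (Fin n)} (hg : g * p = p * g) {τ : ι → ι}
    (hτ : ∀ i, label (g i) = τ (label i)) (a : ι → Circle) :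
    ofCycleValues hl (a ∘ τ) = ofCycleValues hl a := by
  refine Quotient.sound ⟨g⁻¹, Subtype.ext ?_⟩
  rw [ExtTorus.smul_val, inv_inv, mul_assoc, ← hg, inv_mul_cancel_left]
  exact congrArg _ (funext fun i => by simp [hτ])

lemma exists_of_ofCycleValues_eq {a a' : ι → Circle}
    (h : ofCycleValues hl a = ofCycleValues hl a') :
    ∃ g : Perm (Fin n), g * p = p * g ∧ ∀ i, a (label (g i)) = a' (label i) := by
  obtain ⟨g, hg⟩ := Quotient.exact h
  refine ⟨g, mul_inv_eq_iff_eq_mul.mp (congrArg (·.1.1) hg), fun i => ?_⟩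
  simpa [ExtTorus.smul_val] using (congrFun (congrArg (·.1.2) hg) (g i)).symm

lemma exists_ofCycleValues_eq {q : ExtQuotTorus n} (hq : q.conjClass = ConjClasses.mk p) :
    ∃ a, ofCycleValues hl a = q := by
  obtain ⟨⟨⟨γ, z⟩, hz⟩, rfl, rfl⟩ := exists_mk_eq_of_conjClass_eq hq
  exact ⟨z ∘ surjInv hl.surjective,
    congrArg (⟦·⟧) (Subtype.ext (Prod.ext rfl (hl.comp_surjInv_comp hz)))⟩

lemma parametrizesPreimage_ofCycleValues
    (hcent : ∀ g, g * p = p * g → ∀ i, label (g i) = label i) :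
    ParametrizesPreimage conjClass {ConjClasses.mk p} (ofCycleValues hl) where
  injective a a' h := by
    obtain ⟨g, hg, hga⟩ := exists_of_ofCycleValues_eq hl h
    exact hl.surjective.injective_comp_right (funext fun i => by simpa [hcent g hg i] using hga i)
  range_eq := Set.ext fun _ => ⟨by rintro ⟨a, rfl⟩; rfl, exists_ofCycleValues_eq hl⟩

end CycleValues

section CycleValuesSym

/- The cycles labelled `some j` are the `k` cycles of the repeated length, whose values are
recorded only up to permutation; the cycle labelled `none` is the remaining one. -/
variable {n k : ℕ} {p : Perm (Fin n)} {label : Fin n → Option (Fin k)}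
  (hl : p.IsCycleLabelling label)
  (hlift : ∀ σ : Perm (Fin k), ∃ g, g * p = p * g ∧ ∀ i, label (g i) = (label i).map σ)

def ofCycleValuesSym : Circle × SymTorus k → ExtQuotTorus n := fun x =>
  Quotient.liftOn x.2 (fun v => ofCycleValues hl fun o => o.elim x.1 v) fun _ v ⟨σ, hσ⟩ => by
    obtain ⟨g, hg, hgσ⟩ := hlift σ⁻¹
    subst hσ
    convert ofCycleValues_comp hl hg hgσ (fun o => o.elim x.1 v) using 2
    funext o
    cases o <;> rfl

lemma continuous_ofCycleValuesSym : Continuous (ofCycleValuesSym hl hlift) := by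
  rw [(IsOpenQuotientMap.id.prodMap isOpenQuotientMap_quotientMk).isQuotientMap.continuous_iff]
  refine (continuous_ofCycleValues hl).comp (continuous_pi fun o => ?_)
  cases o with
  | none => exact continuous_fst
  | some j => exact (continuous_apply j).comp continuous_snd

lemma parametrizesPreimage_ofCycleValuesSym
    (hcent : ∀ g, g * p = p * g →
      ∃ σ : Perm (Fin k), ∀ i, label (g i) = (label i).map σ) :
    ParametrizesPreimage conjClass {ConjClasses.mk p} (ofCycleValuesSym hl hlift) where
  injective := by
    rintro ⟨c, ⟨v⟩⟩ ⟨c', ⟨v'⟩⟩ h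
    obtain ⟨g, hg, hga⟩ := exists_of_ofCycleValues_eq hl h
    obtain ⟨σ, hσ⟩ := hcent g hg
    have key : (fun o => o.elim c v) ∘ Option.map σ = fun o => o.elim c' v' :=
      hl.surjective.injective_comp_right (funext fun i => by simpa [hσ] using hga i)
    refine Prod.ext (congrFun key none) (Quotient.sound ⟨σ, funext fun j => ?_⟩)
    simpa using (congrFun key (some (σ⁻¹ j))).symm
  range_eq := by
    refine Set.ext fun q => ⟨?_, fun hq => ?_⟩
    · rintro ⟨⟨c, ⟨v⟩⟩, rfl⟩
      rfl
    · obtain ⟨a, rfl⟩ := exists_ofCycleValues_eq hl hq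
      exact ⟨(a none, ⟦a ∘ some⟧),
        congrArg (ofCycleValues hl) (funext (Option.elim_none_some a))⟩

end CycleValuesSym

section Identity

variable {n : ℕ}

def ofSymTorus : SymTorus n → ExtQuotTorus n :=
  Quotient.lift (ofCycleValues Perm.isCycleLabelling_one) fun _ v ⟨σ, hσ⟩ => hσ ▸
    ofCycleValues_comp Perm.isCycleLabelling_one (g := σ⁻¹) (by simp) (τ := ⇑σ⁻¹)
      (fun _ => rfl) v

lemma continuous_ofSymTorus : Continuous (ofSymTorus (n := n)) :=
  (continuous_ofCycleValues _).quotient_lift _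

lemma parametrizesPreimage_ofSymTorus :
    ParametrizesPreimage conjClass {ConjClasses.mk 1} (ofSymTorus (n := n)) where
  injective := by
    rintro ⟨v⟩ ⟨v'⟩ h
    obtain ⟨g, -, hg⟩ := exists_of_ofCycleValues_eq Perm.isCycleLabelling_one h
    exact Quotient.sound ⟨g, funext fun j => by simpa using (hg (g⁻¹ j)).symm⟩
  range_eq := by
    refine Set.ext fun q => ⟨?_, fun hq => ?_⟩
    · rintro ⟨⟨v⟩, rfl⟩
      rfl
    · obtain ⟨a, rfl⟩ := exists_ofCycleValues_eq Perm.isCycleLabelling_one hq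
      exact ⟨⟦a⟧, rfl⟩

end Identity

end ExtQuotTorus

lemma cycleLabelling₅ : (c[0, 1, 2, 3, 4] : Perm (Fin 5)).IsCycleLabelling fun _ => () :=
  ⟨by decide, by decide⟩

lemma cycleLabelling₄₁ :
    (c[0, 1, 2, 3] : Perm (Fin 5)).IsCycleLabelling (![0, 0, 0, 0, 1] : Fin 5 → Fin 2) :=
  ⟨by decide, by decide⟩

lemma cycleLabelling₃₂ :
    (c[0, 1, 2] * c[3, 4] : Perm (Fin 5)).IsCycleLabelling (![0, 0, 0, 1, 1] : Fin 5 → Fin 2) :=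
  ⟨by decide, by decide⟩

lemma cycleLabelling₃₁₁ : (c[0, 1, 2] : Perm (Fin 5)).IsCycleLabelling
    (![none, none, none, some 0, some 1] : Fin 5 → Option (Fin 2)) :=
  ⟨by decide, by decide⟩

lemma cycleLabelling₂₂₁ : (c[0, 1] * c[2, 3] : Perm (Fin 5)).IsCycleLabelling
    (![some 0, some 0, some 1, some 1, none] : Fin 5 → Option (Fin 2)) :=
  ⟨by decide, by decide⟩

lemma cycleLabelling₂₁₁₁ : (c[0, 1] : Perm (Fin 5)).IsCycleLabelling
    (![none, none, some 0, some 1, some 2] : Fin 5 → Option (Fin 3)) :=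
  ⟨by decide, by decide⟩

namespace ExtQuotTorus

noncomputable def partitionMap :
    Circle ⊕ (Circle × Circle) ⊕ (Circle × Circle) ⊕ (Circle × SymTorus 2) ⊕
      (Circle × SymTorus 2) ⊕ (Circle × SymTorus 3) ⊕ SymTorus 5 → ExtQuotTorus 5 :=
  Sum.elim (ofCycleValues cycleLabelling₅ ∘ (Homeomorph.funUnique Unit Circle).symm) <|
  Sum.elim (ofCycleValues cycleLabelling₄₁ ∘ Homeomorph.finTwoArrow.symm) <|
  Sum.elim (ofCycleValues cycleLabelling₃₂ ∘ Homeomorph.finTwoArrow.symm) <|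
  Sum.elim (ofCycleValuesSym cycleLabelling₃₁₁ (by decide)) <|
  Sum.elim (ofCycleValuesSym cycleLabelling₂₂₁ (by decide)) <|
  Sum.elim (ofCycleValuesSym cycleLabelling₂₁₁₁ (by decide)) ofSymTorus

lemma continuous_partitionMap : Continuous partitionMap :=
  ((continuous_ofCycleValues _).comp (Homeomorph.continuous _)).sumElim <|
  ((continuous_ofCycleValues _).comp (Homeomorph.continuous _)).sumElim <|
  ((continuous_ofCycleValues _).comp (Homeomorph.continuous _)).sumElim <|
  (continuous_ofCycleValuesSym _ _).sumElim <| (continuous_ofCycleValuesSym _ _).sumElim <|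
  (continuous_ofCycleValuesSym _ _).sumElim continuous_ofSymTorus

set_option maxRecDepth 10000 in
lemma bijective_partitionMap : Bijective partitionMap := by
  have hΦ : ParametrizesPreimage conjClass _ partitionMap :=
    ((parametrizesPreimage_ofCycleValues cycleLabelling₅ (by decide)).comp_equiv
      (Homeomorph.funUnique Unit Circle).symm.toEquiv).sumElim
    (((parametrizesPreimage_ofCycleValues cycleLabelling₄₁ (by decide)).comp_equiv
      Homeomorph.finTwoArrow.symm.toEquiv).sumElim
    (((parametrizesPreimage_ofCycleValues cycleLabelling₃₂ (by decide)).comp_equiv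
      Homeomorph.finTwoArrow.symm.toEquiv).sumElim
    ((parametrizesPreimage_ofCycleValuesSym cycleLabelling₃₁₁ _ (by decide)).sumElim
    ((parametrizesPreimage_ofCycleValuesSym cycleLabelling₂₂₁ _ (by decide)).sumElim
    ((parametrizesPreimage_ofCycleValuesSym cycleLabelling₂₁₁₁ _ (by decide)).sumElim
      parametrizesPreimage_ofSymTorus ?_) ?_) ?_) ?_) ?_) ?_
  · refine ⟨hΦ.injective, hΦ.surjective ?_⟩
    rintro ⟨x⟩
    show ConjClasses.mk x.1.1 ∈ _
    simp only [Set.mem_union, Set.mem_singleton_iff, ConjClasses.mk_eq_mk_iff_isConj, isConj_iff,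
      ← exists_or]
    generalize x.1.1 = γ
    revert γ
    decide +kernel
  all_goals
    rw [Set.disjoint_singleton_left]
    simp only [Set.mem_union, Set.mem_singleton_iff, ConjClasses.mk_eq_mk_iff_isConj, isConj_iff]
    decide +kernel

end ExtQuotTorus

/-- the extended quotient `𝕋̂⁵/S_5` is homeomorphic to the disjoint union
`𝕋 ⊔ 𝕋² ⊔ 𝕋² ⊔ (𝕋 × Sym²𝕋) ⊔ (𝕋 × Sym²𝕋) ⊔ (𝕋 × Sym³𝕋) ⊔ Sym⁵𝕋`,
one component for each of the seven partitions of `5`. -/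
theorem extended_quotient_torus_five :
    Nonempty (ExtQuotTorus 5 ≃ₜ
      (Circle ⊕ (Circle × Circle) ⊕ (Circle × Circle) ⊕
        (Circle × SymTorus 2) ⊕ (Circle × SymTorus 2) ⊕
        (Circle × SymTorus 3) ⊕ SymTorus 5)) :=
  ⟨(ExtQuotTorus.continuous_partitionMap.homeoOfEquivCompactToT2
    (f := .ofBijective _ ExtQuotTorus.bijective_partitionMap)).symm⟩
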